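/- Assume A is indecomposable and the Weyl group W is infinite. Let ω ∈ W and α ∈ Δ₊ be such that ω^l α ≠ α for every positive integer l. Then |ht(ω^l α)| tends to infinity as l tends to infinity through the natural numbers: for every N there exists L such that |ht(ω^l α)| ≥ N for all natural numbers l ≥ L. -/

import Mathlib

/-!
Every root is sign-definite. For a real root `w e i` this is the classical criterion: `w e i ≥ 0`
whenever `len (w * s i) > len w`. It is proved by induction on `len w`: a reduced word of `w`
ends in `s j` for some `j ≠ i`, and splitting off the maximal alternating block of `s i` and `s j`
reduces the claim to rank two, where the block is shorter than the braid relation (or there is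
none, when `A i j * A j i ≥ 4`) and the coordinates of the block applied to `e i` are computed
explicitly. The same induction shows that `W` keeps the cone `{v ≥ 0, A v ≤ 0}` nonnegative.
The vectors `ω ^ l α` are pairwise distinct and sign-definite, so only finitely many of them lie
in any box, while the height of a sign-definite vector dominates each of its coordinates.
-/
open Matrix Filter Pointwise

namespace KacMoodyPaper

variable {n : ℕ}

/-- `A` is a generalized Cartan matrix. -/
def IsGCM (A : Matrix (Fin n) (Fin n) ℤ) : Prop :=
  (∀ i, A i i = 2) ∧ (∀ i j, i ≠ j → A i j ≤ 0) ∧ (∀ i j, A i j = 0 ↔ A j i = 0)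

/-- The simple reflection `s i` as a linear map: `s i v = v - (A *ᵥ v) i • e i`. -/
def sMap (A : Matrix (Fin n) (Fin n) ℤ) (i : Fin n) : (Fin n → ℤ) →ₗ[ℤ] (Fin n → ℤ) where
  toFun v := v - (A.mulVec v i) • Pi.single i 1
  map_add' x y := by
    simp only [Matrix.mulVec_add, Pi.add_apply, add_smul]
    abel
  map_smul' c x := by
    simp only [Matrix.mulVec_smul, Pi.smul_apply, smul_eq_mul, RingHom.id_apply, smul_sub,
      smul_smul]

theorem sMap_involutive (A : Matrix (Fin n) (Fin n) ℤ) (i : Fin n) (h2 : A i i = 2)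
    (v : Fin n → ℤ) : sMap A i (sMap A i v) = v := by
  have hAe : A.mulVec (Pi.single i 1) i = A i i := by
    simp [Matrix.mulVec_single]
  simp only [sMap, LinearMap.coe_mk, AddHom.coe_mk, Matrix.mulVec_sub, Matrix.mulVec_smul,
    Pi.sub_apply, Pi.smul_apply, hAe, h2, smul_eq_mul]
  ring_nf

/-- The simple reflection `s i` as a `ℤ`-linear automorphism of `ℤ^n`
(determined by `s i (e j) = e j - A i j • e i`). -/
def s (A : Matrix (Fin n) (Fin n) ℤ) (h2 : ∀ i, A i i = 2) (i : Fin n) :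
    (Fin n → ℤ) ≃ₗ[ℤ] (Fin n → ℤ) :=
  LinearEquiv.ofLinear (sMap A i) (sMap A i)
    (LinearMap.ext fun v => sMap_involutive A i (h2 i) v)
    (LinearMap.ext fun v => sMap_involutive A i (h2 i) v)

/-- The Coxeter element `w = s 1 ∘ s 2 ∘ ⋯ ∘ s n` (applying `s n` first). -/
def cox (A : Matrix (Fin n) (Fin n) ℤ) (h2 : ∀ i, A i i = 2) :
    (Fin n → ℤ) ≃ₗ[ℤ] (Fin n → ℤ) :=
  (List.ofFn (fun i : Fin n => s A h2 i)).prod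

/-- The Weyl group: the subgroup of `GL(n, ℤ)` generated by the simple reflections. -/
def weyl (A : Matrix (Fin n) (Fin n) ℤ) (h2 : ∀ i, A i i = 2) :
    Subgroup ((Fin n → ℤ) ≃ₗ[ℤ] (Fin n → ℤ)) :=
  Subgroup.closure (Set.range (s A h2))

/-- The word length of `ω` with respect to the generators `s 1, …, s n`. -/
noncomputable def len (A : Matrix (Fin n) (Fin n) ℤ) (h2 : ∀ i, A i i = 2)
    (ω : (Fin n → ℤ) ≃ₗ[ℤ] (Fin n → ℤ)) : ℕ :=
  sInf {k | ∃ f : Fin k → Fin n, ω = (List.ofFn (fun j => s A h2 (f j))).prod}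

/-- `v ∈ ℤ^n` is positive: nonzero with all coordinates `≥ 0`. -/
def IsPos (v : Fin n → ℤ) : Prop := v ≠ 0 ∧ ∀ i, 0 ≤ v i

/-- The height of a vector: the sum of its coordinates. -/
def ht (v : Fin n → ℤ) : ℤ := ∑ i, v i

/-- The graph `Γ` on `{1, …, n}` with an edge between `i ≠ j` iff `A i j ≠ 0`. -/
def gcmGraph (A : Matrix (Fin n) (Fin n) ℤ) (hsym : ∀ i j, A i j = 0 ↔ A j i = 0) :
    SimpleGraph (Fin n) where
  Adj i j := i ≠ j ∧ A i j ≠ 0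
  symm := by
    constructor
    rintro i j ⟨hij, h⟩
    exact ⟨hij.symm, fun h0 => h ((hsym i j).mpr h0)⟩
  loopless := by constructor; rintro i ⟨h, -⟩; exact h rfl

/-- `A` is indecomposable: the graph `Γ` is connected. -/
def Indecomposable (A : Matrix (Fin n) (Fin n) ℤ) (hsym : ∀ i j, A i j = 0 ↔ A j i = 0) :
    Prop :=
  (gcmGraph A hsym).Connected

/-- `A` is of indefinite type: there is `u > 0` (componentwise) with `A·u < 0` componentwise. -/
def IndefiniteType (A : Matrix (Fin n) (Fin n) ℤ) : Prop :=
  ∃ u : Fin n → ℤ, (∀ i, 0 < u i) ∧ ∀ i, (A.mulVec u) i < 0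

/-- The fundamental set `K`: positive vectors with connected support and `A·v ≤ 0`. -/
def fundK (A : Matrix (Fin n) (Fin n) ℤ) (hsym : ∀ i j, A i j = 0 ↔ A j i = 0) :
    Set (Fin n → ℤ) :=
  {v | IsPos v ∧ ((gcmGraph A hsym).induce {i | v i ≠ 0}).Connected ∧
    ∀ i, (A.mulVec v) i ≤ 0}

/-- The real roots: the `W`-orbits of the standard basis vectors. -/
def realRoots (A : Matrix (Fin n) (Fin n) ℤ) (h2 : ∀ i, A i i = 2) : Set (Fin n → ℤ) :=
  {v | ∃ g ∈ weyl A h2, ∃ i : Fin n, v = g (Pi.single i 1)}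

/-- The positive imaginary roots: the `W`-orbit of the fundamental set `K`. -/
def posImRoots (A : Matrix (Fin n) (Fin n) ℤ) (h2 : ∀ i, A i i = 2)
    (hsym : ∀ i j, A i j = 0 ↔ A j i = 0) : Set (Fin n → ℤ) :=
  {v | ∃ g ∈ weyl A h2, ∃ k ∈ fundK A hsym, v = g k}

/-- The set of roots `Δ`. -/
def roots (A : Matrix (Fin n) (Fin n) ℤ) (h2 : ∀ i, A i i = 2)
    (hsym : ∀ i j, A i j = 0 ↔ A j i = 0) : Set (Fin n → ℤ) :=
  realRoots A h2 ∪ posImRoots A h2 hsym ∪ (-(posImRoots A h2 hsym))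

/-- The set of positive roots `Δ₊`. -/
def posRoots (A : Matrix (Fin n) (Fin n) ℤ) (h2 : ∀ i, A i i = 2)
    (hsym : ∀ i j, A i j = 0 ↔ A j i = 0) : Set (Fin n → ℤ) :=
  {v ∈ roots A h2 hsym | IsPos v}

/-- The set of negative roots `Δ₋ = -Δ₊`. -/
def negRoots (A : Matrix (Fin n) (Fin n) ℤ) (h2 : ∀ i, A i i = 2)
    (hsym : ∀ i j, A i j = 0 ↔ A j i = 0) : Set (Fin n → ℤ) :=
  -(posRoots A h2 hsym)

variable {w u x y : (Fin n → ℤ) ≃ₗ[ℤ] (Fin n → ℤ)}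

section Length

variable (A : Matrix (Fin n) (Fin n) ℤ) (h2 : ∀ i, A i i = 2)

theorem s_apply (i : Fin n) (v : Fin n → ℤ) :
    s A h2 i v = v - (A *ᵥ v) i • Pi.single i 1 := rfl

theorem s_mul_self (i : Fin n) : s A h2 i * s A h2 i = 1 :=
  LinearEquiv.ext (sMap_involutive A i (h2 i))

theorem s_mem_weyl (i : Fin n) : s A h2 i ∈ weyl A h2 :=
  Subgroup.subset_closure ⟨i, rfl⟩

theorem s_single_self (i : Fin n) : s A h2 i (Pi.single i 1) = -Pi.single i 1 := by
  rw [s_apply, mulVec_single_one, col_apply, h2]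
  module

def word (L : List (Fin n)) : (Fin n → ℤ) ≃ₗ[ℤ] (Fin n → ℤ) :=
  (L.map (s A h2)).prod

theorem word_append (L M : List (Fin n)) :
    word A h2 (L ++ M) = word A h2 L * word A h2 M := by
  simp [word]

theorem word_concat (L : List (Fin n)) (i : Fin n) :
    word A h2 (L ++ [i]) = word A h2 L * s A h2 i := by
  simp [word]

theorem word_reverse (L : List (Fin n)) : word A h2 L.reverse = (word A h2 L)⁻¹ := by
  induction L with
  | nil => simp [word]
  | cons a L ih =>
    rw [List.reverse_cons, word_concat, ih, ← inv_eq_of_mul_eq_one_right (s_mul_self A h2 a),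
      ← _root_.mul_inv_rev]
    simp [word]

theorem exists_word_of_mem_weyl (hw : w ∈ weyl A h2) : ∃ L : List (Fin n), w = word A h2 L := by
  induction hw using Subgroup.closure_induction with
  | mem x hx =>
    obtain ⟨i, rfl⟩ := hx
    exact ⟨[i], by simp [word]⟩
  | one => exact ⟨[], rfl⟩
  | mul x y _ _ hx hy =>
    obtain ⟨L, rfl⟩ := hx
    obtain ⟨M, rfl⟩ := hy
    exact ⟨L ++ M, (word_append A h2 L M).symm⟩
  | inv x _ hx =>
    obtain ⟨L, rfl⟩ := hx
    exact ⟨L.reverse, (word_reverse A h2 L).symm⟩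

theorem word_ofFn {k : ℕ} (f : Fin k → Fin n) :
    word A h2 (List.ofFn f) = (List.ofFn fun j => s A h2 (f j)).prod := by
  rw [word, List.map_ofFn]
  rfl

theorem len_le_length {L : List (Fin n)} (h : w = word A h2 L) : len A h2 w ≤ L.length :=
  Nat.sInf_le ⟨L.get, by rw [h, ← word_ofFn, List.ofFn_get]⟩

theorem exists_word_length_eq_len (hw : w ∈ weyl A h2) :
    ∃ L : List (Fin n), L.length = len A h2 w ∧ w = word A h2 L := by
  obtain ⟨L, hL⟩ := exists_word_of_mem_weyl A h2 hw
  obtain ⟨f, hf⟩ := Nat.sInf_mem (s := {k | ∃ f : Fin k → Fin n,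
    w = (List.ofFn fun j => s A h2 (f j)).prod}) ⟨L.length, L.get, by
      rw [hL, ← word_ofFn, List.ofFn_get]⟩
  exact ⟨List.ofFn f, List.length_ofFn, by rw [word_ofFn]; exact hf⟩

theorem eq_one_of_len_eq_zero (hw : w ∈ weyl A h2) (h : len A h2 w = 0) : w = 1 := by
  obtain ⟨L, hL, rfl⟩ := exists_word_length_eq_len A h2 hw
  rw [List.eq_nil_of_length_eq_zero (hL.trans h)]
  rfl

theorem len_mul_le (hx : x ∈ weyl A h2) (hy : y ∈ weyl A h2) :
    len A h2 (x * y) ≤ len A h2 x + len A h2 y := by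
  obtain ⟨L, hL, rfl⟩ := exists_word_length_eq_len A h2 hx
  obtain ⟨M, hM, rfl⟩ := exists_word_length_eq_len A h2 hy
  simpa [hL, hM] using len_le_length A h2 (word_append A h2 L M).symm

theorem len_s_le (i : Fin n) : len A h2 (s A h2 i) ≤ 1 :=
  len_le_length A h2 (L := [i]) (by simp [word])

theorem len_le_len_mul_s_add_one (hw : w ∈ weyl A h2) (i : Fin n) :
    len A h2 w ≤ len A h2 (w * s A h2 i) + 1 := by
  have h := len_mul_le A h2 (mul_mem hw (s_mem_weyl A h2 i)) (s_mem_weyl A h2 i)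
  rw [mul_assoc, s_mul_self, mul_one] at h
  linarith [len_s_le A h2 i]

theorem det_s (i : Fin n) : LinearEquiv.det (s A h2 i) = -1 := by
  have hmat : LinearMap.toMatrix' (s A h2 i : (Fin n → ℤ) →ₗ[ℤ] (Fin n → ℤ)) =
      1 + replicateCol Unit (-Pi.single i (1 : ℤ)) * replicateRow Unit (A i) := by
    ext k j
    simp only [LinearMap.toMatrix'_apply, LinearEquiv.coe_coe, s_apply, mulVec_single_one,
      Matrix.add_apply, mul_apply, replicateCol_apply, replicateRow_apply, Finset.univ_unique,
      Finset.sum_singleton, Pi.sub_apply, Pi.smul_apply, smul_eq_mul, Pi.neg_apply, one_apply,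
      Pi.single_apply, col_apply]
    split_ifs <;> simp_all
  apply Units.ext
  rw [LinearEquiv.coe_det, ← LinearMap.det_toMatrix', hmat,
    det_one_add_replicateCol_mul_replicateRow]
  simp [dotProduct, Pi.single_apply, h2 i]

theorem det_word (L : List (Fin n)) : LinearEquiv.det (word A h2 L) = (-1) ^ L.length := by
  induction L with
  | nil => simp [word]
  | cons a L ih =>
    rw [List.length_cons, pow_succ', ← ih]
    simp [word, det_s A h2]

theorem det_eq_neg_one_pow_len (hw : w ∈ weyl A h2) :
    LinearEquiv.det w = (-1) ^ len A h2 w := by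
  obtain ⟨L, hL, rfl⟩ := exists_word_length_eq_len A h2 hw
  rw [det_word, hL]

theorem len_mul_s_eq_or (hw : w ∈ weyl A h2) (i : Fin n) :
    len A h2 (w * s A h2 i) = len A h2 w + 1 ∨ len A h2 (w * s A h2 i) + 1 = len A h2 w := by
  have hne : len A h2 (w * s A h2 i) ≠ len A h2 w := fun h => by
    have hdet := det_eq_neg_one_pow_len A h2 (mul_mem hw (s_mem_weyl A h2 i))
    rw [map_mul, det_s, h, det_eq_neg_one_pow_len A h2 hw, mul_eq_left] at hdet
    exact absurd hdet (by decide)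
  have hle : len A h2 (w * s A h2 i) ≤ len A h2 w + 1 :=
    (len_mul_le A h2 hw (s_mem_weyl A h2 i)).trans (by linarith [len_s_le A h2 i])
  have := len_le_len_mul_s_add_one A h2 hw i
  omega

end Length

section RankTwo

variable (A : Matrix (Fin n) (Fin n) ℤ) (h2 : ∀ i, A i i = 2)

/-- The alternating product `⋯ * s i * s j` of `m` factors; its rightmost factor is `s j`. -/
def alt : Fin n → Fin n → ℕ → (Fin n → ℤ) ≃ₗ[ℤ] (Fin n → ℤ)
  | _, _, 0 => 1
  | i, j, m + 1 => alt j i m * s A h2 j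

theorem alt_mem_weyl (i j : Fin n) (m : ℕ) : alt A h2 i j m ∈ weyl A h2 := by
  induction m generalizing i j with
  | zero => exact one_mem _
  | succ m ih => exact mul_mem (ih j i) (s_mem_weyl A h2 j)

theorem len_alt_le (i j : Fin n) (m : ℕ) : len A h2 (alt A h2 i j m) ≤ m := by
  induction m generalizing i j with
  | zero => exact len_le_length A h2 (L := []) rfl
  | succ m ih =>
    calc len A h2 (alt A h2 j i m * s A h2 j)
        ≤ len A h2 (alt A h2 j i m) + len A h2 (s A h2 j) :=
          len_mul_le A h2 (alt_mem_weyl A h2 j i m) (s_mem_weyl A h2 j)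
      _ ≤ m + 1 := add_le_add (ih j i) (len_s_le A h2 j)

theorem exists_alt_add_eq_mul (i j : Fin n) (p q : ℕ) :
    ∃ x ∈ weyl A h2, len A h2 x ≤ p ∧ alt A h2 i j (p + q) = x * alt A h2 i j q := by
  induction q generalizing i j with
  | zero =>
    exact ⟨alt A h2 i j p, alt_mem_weyl A h2 i j p, len_alt_le A h2 i j p, (mul_one _).symm⟩
  | succ q ih =>
    obtain ⟨x, hx, hlen, heq⟩ := ih j i
    exact ⟨x, hx, hlen, by rw [← add_assoc, alt, heq, mul_assoc, alt]⟩

theorem alt_succ_eq_s_mul (i j : Fin n) (m : ℕ) :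
    alt A h2 i j (m + 1) = (if m % 2 = 0 then s A h2 j else s A h2 i) * alt A h2 i j m := by
  induction m generalizing i j with
  | zero => simp [alt]
  | succ m ih =>
    rw [alt, ih j i, alt, mul_assoc]
    rcases Nat.mod_two_eq_zero_or_one m with hm | hm <;> simp [hm, Nat.succ_mod_two_eq_zero_iff]

theorem s_apply_single_add_single (i j k : Fin n) (c d : ℤ) :
    s A h2 k (c • Pi.single i 1 + d • Pi.single j 1) =
      c • Pi.single i 1 + d • Pi.single j 1 - (c * A k i + d * A k j) • Pi.single k 1 := by
  simp only [s_apply, mulVec_add, mulVec_smul, mulVec_single_one, Pi.add_apply, Pi.smul_apply,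
    col_apply, smul_eq_mul]

/-- The coordinates of `alt A h2 i j m (e i)` on `e i` and `e j`, for `a = -A i j`, `b = -A j i`. -/
def altCoeff (a b : ℤ) : ℕ → ℤ × ℤ
  | 0 => (1, 0)
  | m + 1 =>
    let (c, d) := altCoeff a b m
    if m % 2 = 0 then (c, b * c - d) else (a * d - c, d)

theorem alt_apply_single (i j : Fin n) (m : ℕ) :
    alt A h2 i j m (Pi.single i 1) = (altCoeff (-A i j) (-A j i) m).1 • Pi.single i 1 +
      (altCoeff (-A i j) (-A j i) m).2 • Pi.single j 1 := by
  induction m with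
  | zero => simp [alt, altCoeff]
  | succ m ih =>
    rw [alt_succ_eq_s_mul, LinearEquiv.mul_apply, ih, altCoeff]
    split_ifs <;> rw [s_apply_single_add_single] <;> simp only [h2] <;> module

theorem altCoeff_nonneg_of_four_le_mul {a b : ℤ} (ha : 0 ≤ a) (hb : 0 ≤ b) (hab : 4 ≤ a * b)
    (m : ℕ) : 0 ≤ (altCoeff a b m).1 ∧ 0 ≤ (altCoeff a b m).2 ∧
      (m % 2 = 0 → a * (altCoeff a b m).2 ≤ 2 * (altCoeff a b m).1) ∧
      (m % 2 = 1 → b * (altCoeff a b m).1 ≤ 2 * (altCoeff a b m).2) := by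
  induction m with
  | zero => simp [altCoeff]
  | succ m ih =>
    obtain ⟨hc, hd, heven, hodd⟩ := ih
    simp only [altCoeff]
    split_ifs with hm
    · have := heven hm
      refine ⟨hc, ?_, by omega, fun _ => ?_⟩ <;> nlinarith
    · have := hodd (by omega)
      refine ⟨?_, hd, fun _ => ?_, by omega⟩ <;> nlinarith

/-- The pairs `(-A i j, -A j i)` of rank-two generalized Cartan matrices of finite type. -/
def finiteTypePairs : Finset (ℤ × ℤ) := {(0, 0), (1, 1), (1, 2), (2, 1), (1, 3), (3, 1)}

/-- The order of `s i * s j` when `a * b = A i j * A j i < 4`. -/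
def braidLen (a b : ℤ) : ℕ :=
  if a * b = 0 then 2 else if a * b = 1 then 3 else if a * b = 2 then 4 else 6

theorem mem_finiteTypePairs {a b : ℤ} (ha : 0 ≤ a) (hb : 0 ≤ b) (hab : a * b < 4)
    (h0 : a = 0 ↔ b = 0) : (a, b) ∈ finiteTypePairs := by
  by_cases ha0 : a = 0
  · simp [ha0, h0.mp ha0, finiteTypePairs]
  · have hb0 : b ≠ 0 := mt h0.mpr ha0
    have ha3 : a ≤ 3 := by nlinarith [lt_of_le_of_ne hb (Ne.symm hb0)]
    have hb3 : b ≤ 3 := by nlinarith [lt_of_le_of_ne ha (Ne.symm ha0)]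
    interval_cases a <;> interval_cases b <;> simp_all [finiteTypePairs]

theorem altCoeff_nonneg_of_lt_braidLen :
    ∀ p ∈ finiteTypePairs, ∀ m < braidLen p.1 p.2,
      0 ≤ (altCoeff p.1 p.2 m).1 ∧ 0 ≤ (altCoeff p.1 p.2 m).2 := by
  decide

theorem alt_braidLen {i j : Fin n} (h : (-A i j, -A j i) ∈ finiteTypePairs) :
    alt A h2 i j (braidLen (-A i j) (-A j i)) = alt A h2 j i (braidLen (-A i j) (-A j i)) := by
  simp only [finiteTypePairs, Finset.mem_insert, Finset.mem_singleton, Prod.mk.injEq] at h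
  have hi := h2 i
  have hj := h2 j
  rcases h with ⟨ha, hb⟩ | ⟨ha, hb⟩ | ⟨ha, hb⟩ | ⟨ha, hb⟩ | ⟨ha, hb⟩ | ⟨ha, hb⟩
  all_goals
    rw [neg_eq_iff_eq_neg] at ha hb
    simp only [braidLen, ha, hb, neg_neg, Int.reduceMul, Int.reduceNeg, mul_one, one_mul,
      OfNat.ofNat_ne_zero, OfNat.ofNat_ne_one, one_ne_zero, reduceIte, Int.reduceEq]
    ext v k
    simp only [alt, LinearEquiv.mul_apply, LinearEquiv.coe_one, id, s_apply, mulVec_sub,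
      mulVec_smul, mulVec_single_one, col_apply, Pi.sub_apply, Pi.smul_apply, smul_eq_mul, ha, hb,
      hi, hj]
    ring

theorem len_mul_alt_mul_s_lt_of_braid (hu : u ∈ weyl A h2) {i j : Fin n} {q m : ℕ}
    (hbraid : alt A h2 i j q = alt A h2 j i q) (hq : 0 < q) (hqm : q ≤ m) :
    len A h2 (u * alt A h2 i j m * s A h2 i) < len A h2 u + m := by
  obtain ⟨q, rfl⟩ := Nat.exists_eq_add_one_of_ne_zero hq.ne'
  obtain ⟨x, hx, hlen, hsplit⟩ := exists_alt_add_eq_mul A h2 i j (m - (q + 1)) (q + 1)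
  rw [Nat.sub_add_cancel hqm] at hsplit
  have hcancel : u * alt A h2 i j m * s A h2 i = u * x * alt A h2 i j q := by
    rw [hsplit, hbraid, alt, mul_assoc, mul_assoc, mul_assoc, s_mul_self, mul_one, mul_assoc]
  have := len_mul_le A h2 (mul_mem hu hx) (alt_mem_weyl A h2 i j q)
  have := len_mul_le A h2 hu hx
  have := len_alt_le A h2 i j q
  rw [hcancel]
  omega

/-- Here `m` is below the braid length, since otherwise a braid relation would shorten
`u * alt A h2 i j m * s A h2 i`. -/
theorem exists_alt_apply_single_eq_nonneg (hoff : ∀ p q : Fin n, p ≠ q → A p q ≤ 0)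
    (hsym : ∀ p q : Fin n, A p q = 0 ↔ A q p = 0) {i j : Fin n} (hij : i ≠ j)
    (hu : u ∈ weyl A h2) {m : ℕ} (hlen : len A h2 (u * alt A h2 i j m) = len A h2 u + m)
    (hasc : len A h2 (u * alt A h2 i j m * s A h2 i) = len A h2 (u * alt A h2 i j m) + 1) :
    ∃ c d : ℤ, 0 ≤ c ∧ 0 ≤ d ∧
      alt A h2 i j m (Pi.single i 1) = c • Pi.single i 1 + d • Pi.single j 1 := by
  suffices 0 ≤ (altCoeff (-A i j) (-A j i) m).1 ∧ 0 ≤ (altCoeff (-A i j) (-A j i) m).2 from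
    ⟨_, _, this.1, this.2, alt_apply_single A h2 i j m⟩
  have ha : 0 ≤ -A i j := neg_nonneg.mpr (hoff i j hij)
  have hb : 0 ≤ -A j i := neg_nonneg.mpr (hoff j i hij.symm)
  by_cases h4 : 4 ≤ -A i j * -A j i
  · exact (altCoeff_nonneg_of_four_le_mul ha hb h4 m).imp_right And.left
  have hfin := mem_finiteTypePairs ha hb (not_le.mp h4) (by simp [hsym i j])
  refine altCoeff_nonneg_of_lt_braidLen _ hfin m (not_le.mp fun hm => ?_)
  have := len_mul_alt_mul_s_lt_of_braid A h2 hu (alt_braidLen A h2 hfin)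
    (by unfold braidLen; split_ifs <;> norm_num) hm
  omega

end RankTwo

section Positivity

variable (A : Matrix (Fin n) (Fin n) ℤ) (h2 : ∀ i, A i i = 2)

theorem exists_len_mul_s_add_one_eq (hw : w ∈ weyl A h2) (h : len A h2 w ≠ 0) :
    ∃ j, len A h2 (w * s A h2 j) + 1 = len A h2 w := by
  obtain ⟨L, hL, rfl⟩ := exists_word_length_eq_len A h2 hw
  obtain rfl | ⟨L, j, rfl⟩ := L.eq_nil_or_concat
  · exact absurd hL.symm h
  refine ⟨j, le_antisymm ?_ (len_le_len_mul_s_add_one A h2 hw j)⟩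
  have hcancel : word A h2 (L.concat j) * s A h2 j = word A h2 L := by
    rw [List.concat_eq_append, word_concat, mul_assoc, s_mul_self, mul_one]
  have := len_le_length A h2 hcancel
  simp only [List.length_concat] at hL
  omega

theorem exists_eq_mul_alt (hw : w ∈ weyl A h2) {i j : Fin n} (hij : i ≠ j)
    (hi : len A h2 (w * s A h2 i) = len A h2 w + 1)
    (hj : len A h2 (w * s A h2 j) + 1 = len A h2 w) :
    ∃ u ∈ weyl A h2, ∃ m, 0 < m ∧ w = u * alt A h2 i j m ∧ len A h2 w = len A h2 u + m ∧
      len A h2 (u * s A h2 i) = len A h2 u + 1 ∧ len A h2 (u * s A h2 j) = len A h2 u + 1 := by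
  induction hk : len A h2 w using Nat.strong_induction_on generalizing w i j with
  | _ k ih =>
  have hw' : w * s A h2 j ∈ weyl A h2 := mul_mem hw (s_mem_weyl A h2 j)
  have hcancel : w * s A h2 j * s A h2 j = w := by rw [mul_assoc, s_mul_self, mul_one]
  rcases len_mul_s_eq_or A h2 hw' i with hi' | hi'
  · refine ⟨w * s A h2 j, hw', 1, one_pos, ?_, by omega, hi', by rw [hcancel]; omega⟩
    rw [alt, alt, one_mul, hcancel]
  · obtain ⟨u, hu, m, hm, hdecomp, hlen, hui, huj⟩ :=
      ih _ (by omega) hw' hij.symm (by rw [hcancel]; omega) hi' rfl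
    refine ⟨u, hu, m + 1, m.succ_pos, ?_, by omega, huj, hui⟩
    rw [alt, ← mul_assoc, ← hdecomp, hcancel]

variable {A h2}

theorem apply_single_nonneg_of_len_mul_s (hoff : ∀ p q : Fin n, p ≠ q → A p q ≤ 0)
    (hsym : ∀ p q : Fin n, A p q = 0 ↔ A q p = 0)
    (hw : w ∈ weyl A h2) {i : Fin n} (hasc : len A h2 (w * s A h2 i) = len A h2 w + 1) :
    0 ≤ w (Pi.single i 1) := by
  induction hk : len A h2 w using Nat.strong_induction_on generalizing w i with
  | _ k ih =>
  by_cases h0 : len A h2 w = 0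
  · rw [eq_one_of_len_eq_zero A h2 hw h0]
    exact Pi.single_nonneg.mpr zero_le_one
  obtain ⟨j, hj⟩ := exists_len_mul_s_add_one_eq A h2 hw h0
  have hij : i ≠ j := by rintro rfl; omega
  obtain ⟨u, hu, m, hm, rfl, hlen, hui, huj⟩ := exists_eq_mul_alt A h2 hw hij hasc hj
  obtain ⟨c, d, hc, hd, hcd⟩ :=
    exists_alt_apply_single_eq_nonneg A h2 hoff hsym hij hu hlen hasc
  rw [LinearEquiv.mul_apply, hcd, map_add, map_smul, map_smul]
  exact add_nonneg (smul_nonneg hc (ih _ (by omega) hu hui rfl))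
    (smul_nonneg hd (ih _ (by omega) hu huj rfl))

theorem apply_single_nonneg_or_nonpos (hoff : ∀ p q : Fin n, p ≠ q → A p q ≤ 0)
    (hsym : ∀ p q : Fin n, A p q = 0 ↔ A q p = 0) (hw : w ∈ weyl A h2) (i : Fin n) :
    0 ≤ w (Pi.single i 1) ∨ w (Pi.single i 1) ≤ 0 := by
  have hw' : w * s A h2 i ∈ weyl A h2 := mul_mem hw (s_mem_weyl A h2 i)
  rcases len_mul_s_eq_or A h2 hw i with hasc | hdesc
  · exact Or.inl (apply_single_nonneg_of_len_mul_s hoff hsym hw hasc)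
  · have hasc' : len A h2 (w * s A h2 i * s A h2 i) = len A h2 (w * s A h2 i) + 1 := by
      rw [mul_assoc, s_mul_self, mul_one]; omega
    have hneg : w (Pi.single i 1) = -(w * s A h2 i) (Pi.single i 1) := by
      rw [LinearEquiv.mul_apply, s_single_self, map_neg, neg_neg]
    exact Or.inr (hneg ▸ neg_nonpos.mpr (apply_single_nonneg_of_len_mul_s hoff hsym hw' hasc'))

theorem apply_nonneg_of_mulVec_nonpos (hoff : ∀ p q : Fin n, p ≠ q → A p q ≤ 0)
    (hsym : ∀ p q : Fin n, A p q = 0 ↔ A q p = 0) {v : Fin n → ℤ} (hv : 0 ≤ v)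
    (hAv : A *ᵥ v ≤ 0) (hw : w ∈ weyl A h2) : 0 ≤ w v := by
  induction hk : len A h2 w using Nat.strong_induction_on generalizing w with
  | _ k ih =>
  by_cases h0 : len A h2 w = 0
  · rwa [eq_one_of_len_eq_zero A h2 hw h0]
  obtain ⟨j, hj⟩ := exists_len_mul_s_add_one_eq A h2 hw h0
  have hw' : w * s A h2 j ∈ weyl A h2 := mul_mem hw (s_mem_weyl A h2 j)
  have hcancel : w * s A h2 j * s A h2 j = w := by rw [mul_assoc, s_mul_self, mul_one]
  have hej : 0 ≤ (w * s A h2 j) (Pi.single j 1) :=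
    apply_single_nonneg_of_len_mul_s hoff hsym hw' (by rw [hcancel]; omega)
  have hexpand : w v = (w * s A h2 j) v + (-(A *ᵥ v) j) • (w * s A h2 j) (Pi.single j 1) := by
    conv_lhs => rw [← hcancel]
    rw [LinearEquiv.mul_apply, s_apply, map_sub, map_smul, neg_smul, sub_eq_add_neg]
  rw [hexpand]
  exact add_nonneg (ih _ (by omega) hw' rfl) (smul_nonneg (neg_nonneg.mpr (hAv j)) hej)

end Positivity

section Roots

variable {A : Matrix (Fin n) (Fin n) ℤ} {h2 : ∀ i, A i i = 2}
  {hsym : ∀ p q : Fin n, A p q = 0 ↔ A q p = 0}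

theorem apply_mem_roots (hw : w ∈ weyl A h2) {α : Fin n → ℤ} (hα : α ∈ roots A h2 hsym) :
    w α ∈ roots A h2 hsym := by
  rcases hα with (⟨g, hg, i, rfl⟩ | ⟨g, hg, k, hk, rfl⟩) | ⟨g, hg, k, hk, hα⟩
  · exact Or.inl (Or.inl ⟨w * g, mul_mem hw hg, i, rfl⟩)
  · exact Or.inl (Or.inr ⟨w * g, mul_mem hw hg, k, hk, rfl⟩)
  · refine Or.inr ⟨w * g, mul_mem hw hg, k, hk, ?_⟩
    rw [LinearEquiv.mul_apply, ← hα, map_neg]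

theorem nonneg_or_nonpos_of_mem_roots (hoff : ∀ p q : Fin n, p ≠ q → A p q ≤ 0)
    {α : Fin n → ℤ} (hα : α ∈ roots A h2 hsym) : 0 ≤ α ∨ α ≤ 0 := by
  rcases hα with (⟨g, hg, i, rfl⟩ | ⟨g, hg, k, hk, rfl⟩) | ⟨g, hg, k, hk, hα⟩
  · exact apply_single_nonneg_or_nonpos hoff hsym hg i
  · exact Or.inl (apply_nonneg_of_mulVec_nonpos hoff hsym hk.1.2 hk.2.2 hg)
  · exact Or.inr (neg_nonneg.mp (hα ▸ apply_nonneg_of_mulVec_nonpos hoff hsym hk.1.2 hk.2.2 hg))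

end Roots

theorem abs_apply_le_abs_ht {v : Fin n → ℤ} (hv : 0 ≤ v ∨ v ≤ 0) (i : Fin n) :
    |v i| ≤ |ht v| := by
  unfold ht
  rcases hv with hv | hv
  · rw [abs_of_nonneg (hv i), abs_of_nonneg (Finset.sum_nonneg fun j _ => hv j)]
    exact Finset.single_le_sum (fun j _ => hv j) (Finset.mem_univ i)
  · rw [abs_of_nonpos (hv i), abs_of_nonpos (Finset.sum_nonpos fun j _ => hv j),
      ← Finset.sum_neg_distrib]
    exact Finset.single_le_sum (f := fun j => -v j) (fun j _ => neg_nonneg.mpr (hv j))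
      (Finset.mem_univ i)

theorem tendsto_abs_ht_of_injective {β : ℕ → Fin n → ℤ} (hβ : Function.Injective β)
    (hsign : ∀ l, 0 ≤ β l ∨ β l ≤ 0) : Tendsto (fun l => |ht (β l)|) atTop atTop := by
  refine tendsto_atTop.mpr fun N => ?_
  rw [← Nat.cofinite_eq_atTop, eventually_cofinite]
  refine ((Set.finite_Icc (-fun _ => N) fun _ => N).preimage hβ.injOn).subset fun l hl => ?_
  have hcoord := fun i => (abs_apply_le_abs_ht (hsign l) i).trans (not_le.mp hl).le
  exact ⟨fun i => neg_le_of_abs_le (hcoord i), fun i => le_of_abs_le (hcoord i)⟩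

theorem injective_pow_smul {G X : Type*} [Group G] [MulAction G X] {g : G} {x : X}
    (h : ∀ l : ℕ, 0 < l → g ^ l • x ≠ x) :
    Function.Injective fun l : ℕ => g ^ l • x := by
  intro a b hab
  wlog hle : a ≤ b generalizing a b
  · exact (this hab.symm (le_of_not_ge hle)).symm
  obtain ⟨k, rfl⟩ := Nat.exists_eq_add_of_le hle
  by_contra hk
  refine h k (by omega) (MulAction.injective (g ^ a) ?_)
  simpa [pow_add, mul_smul] using hab.symm

theorem abs_height_tendsto_atTop_general (n : ℕ) (A : Matrix (Fin n) (Fin n) ℤ) (hA : IsGCM A)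
    (ω : (Fin n → ℤ) ≃ₗ[ℤ] (Fin n → ℤ)) (hω : ω ∈ weyl A hA.1)
    (α : Fin n → ℤ) (hα : α ∈ posRoots A hA.1 hA.2.2)
    (hfix : ∀ l : ℕ, 0 < l → (ω ^ l) α ≠ α) :
    ∀ N : ℕ, ∃ L : ℕ, ∀ l : ℕ, L ≤ l → (N : ℤ) ≤ |ht ((ω ^ l) α)| := by
  have hsign : ∀ l : ℕ, 0 ≤ (ω ^ l) α ∨ (ω ^ l) α ≤ 0 := fun l =>
    nonneg_or_nonpos_of_mem_roots hA.2.1 (apply_mem_roots (pow_mem hω l) hα.1)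
  have hinj : Function.Injective fun l : ℕ => (ω ^ l) α :=
    injective_pow_smul (g := ω) (x := α) hfix
  exact fun N => tendsto_atTop_atTop.mp (tendsto_abs_ht_of_injective hinj hsign) N

/-- if `A` is indecomposable with infinite Weyl group, `ω ∈ W` and `α ∈ Δ₊`
satisfy `ω^l α ≠ α` for every positive integer `l`, then `|ht(ω^l α)|` tends to infinity:
for every `N` there is `L` such that `|ht(ω^l α)| ≥ N` for all naturals `l ≥ L`. -/
theorem abs_height_tendsto_atTop (n : ℕ) (hn : 1 ≤ n) (A : Matrix (Fin n) (Fin n) ℤ)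
    (hA : IsGCM A) (hInd : Indecomposable A hA.2.2)
    (hWinf : Infinite (weyl A hA.1))
    (ω : (Fin n → ℤ) ≃ₗ[ℤ] (Fin n → ℤ)) (hω : ω ∈ weyl A hA.1)
    (α : Fin n → ℤ) (hα : α ∈ posRoots A hA.1 hA.2.2)
    (hfix : ∀ l : ℕ, 0 < l → (ω ^ l) α ≠ α) :
    ∀ N : ℕ, ∃ L : ℕ, ∀ l : ℕ, L ≤ l → (N : ℤ) ≤ |ht ((ω ^ l) α)| :=
  abs_height_tendsto_atTop_general n A hA ω hω α hα hfix

end KacMoodyPaper
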